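/- arXiv:2307.06552 — 2 statements merged into one kernel-verified Lean document; each statement's English description precedes it below -/
import Mathlib

section
/- Consistency of the LAGO GLM estimator (Theorem 1). In the two-stage LAGO setup, suppose that β* is a well-separated zero of the population estimating function u, i.e. for every ε > 0 one has inf{‖u(β)‖ : β ∈ B, ‖β − β*‖ ≥ ε} > 0 (this holds when there is enough variation in the intervention components), and let β̂_n : Ω → B be measurable random vectors satisfying U_n(β̂_n) = 0 almost surely for every n. Then β̂_n → β* in probability as n → ∞, i.e. for every δ > 0, ℙ(‖β̂_n − β*‖ > δ) → 0. -/
/-!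
Uniformly over the compact parameter set `B`, `U_n` converges to `u` in probability. Each
center contributes `(n_j / n) ψ(β, X_j) + (Σᵢ εᵢⱼ / n) φ(β, X_j)` with
`ψ(β, x) = h'(⟨β, x⟩) (h(⟨β*, x⟩) - h(⟨β, x⟩)) x` (`meanScore`) and `φ(β, x) = h'(⟨β, x⟩) x`
(`errorScore`). The weights `n_j / n` converge to `α_j`, the error averages vanish by the strong
law of large numbers (for stage 2 after transporting it along the equality of joint laws), and
`X_j^{(2,n)} → x_j^{(2)}` in probability becomes uniform convergence in `β` through the uniform
continuity of `ψ` and `φ` on `B` times a compact neighbourhood of `x_j^{(2)}`. On the event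
`‖β̂_n - β*‖ ≥ δ` the well-separation gives `‖u(β̂_n)‖ ≥ c` while `U_n(β̂_n) = 0`, so `U_n`
deviates from `u` by at least `c` somewhere on `B`, an event of vanishing probability.
-/

open MeasureTheory ProbabilityTheory Filter
open scoped RealInnerProductSpace BigOperators NNReal Topology ENNReal

noncomputable section

/-- Concatenate `(1, a, z)` into a design vector in `ℝ^(1+P+Q)`. -/
def designVec {P Q : ℕ} (a : EuclideanSpace ℝ (Fin P)) (z : EuclideanSpace ℝ (Fin Q)) :
    EuclideanSpace ℝ (Fin (1 + P + Q)) :=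
  (EuclideanSpace.equiv (Fin (1 + P + Q)) ℝ).symm
    (Fin.append (Fin.append ![(1 : ℝ)] ((EuclideanSpace.equiv (Fin P) ℝ) a))
      ((EuclideanSpace.equiv (Fin Q) ℝ) z))

/-- The two-stage LAGO setup. -/
structure LagoSetup (Ω : Type) [MeasurableSpace Ω] (Pr : Measure Ω) (J1 J2 P Q : ℕ) where
  hJ1 : 1 ≤ J1
  hJ2 : 1 ≤ J2
  hP : 1 ≤ P
  hQ : 1 ≤ Q
  /-- stage-1 interventions -/
  a1 : Fin J1 → EuclideanSpace ℝ (Fin P)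
  /-- stage-1 center covariates -/
  z1 : Fin J1 → EuclideanSpace ℝ (Fin Q)
  /-- limit stage-2 interventions -/
  a2 : Fin J2 → EuclideanSpace ℝ (Fin P)
  /-- stage-2 center covariates -/
  z2 : Fin J2 → EuclideanSpace ℝ (Fin Q)
  /-- random stage-2 interventions, for each total sample size `n` -/
  A2 : ℕ → Fin J2 → Ω → EuclideanSpace ℝ (Fin P)
  measA2 : ∀ n j, Measurable (A2 n j)
  /-- per-center sample sizes, stage 1 -/
  n1 : ℕ → Fin J1 → ℕ
  /-- per-center sample sizes, stage 2 -/
  n2 : ℕ → Fin J2 → ℕ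
  sum_sizes : ∀ n, (∑ j, n1 n j) + (∑ j, n2 n j) = n
  α1 : Fin J1 → ℝ
  α2 : Fin J2 → ℝ
  α1_pos : ∀ j, 0 < α1 j
  α2_pos : ∀ j, 0 < α2 j
  α1_lim : ∀ j, Tendsto (fun n : ℕ => (n1 n j : ℝ) / n) atTop (𝓝 (α1 j))
  α2_lim : ∀ j, Tendsto (fun n : ℕ => (n2 n j : ℝ) / n) atTop (𝓝 (α2 j))
  /-- the mean function (inverse link) -/
  h : ℝ → ℝ
  h_smooth : ContDiff ℝ 2 h
  /-- the (compact) parameter space -/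
  B : Set (EuclideanSpace ℝ (Fin (1 + P + Q)))
  B_compact : IsCompact B
  /-- the true parameter -/
  βstar : EuclideanSpace ℝ (Fin (1 + P + Q))
  βstar_mem : βstar ∈ B
  /-- stage-1 errors -/
  ε1 : Fin J1 → ℕ → Ω → ℝ
  /-- realized stage-2 errors -/
  ε2n : ℕ → Fin J2 → ℕ → Ω → ℝ
  /-- coupled i.i.d. stage-2 error arrays -/
  ε2 : Fin J2 → ℕ → Ω → ℝ
  meas_ε1 : ∀ j i, Measurable (ε1 j i)
  meas_ε2n : ∀ n j i, Measurable (ε2n n j i)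
  meas_ε2 : ∀ j i, Measurable (ε2 j i)
  /-- stage-1 error variances σ₁²(j) -/
  var1 : Fin J1 → ℝ
  /-- stage-2 error variances σ₂²(j) -/
  var2 : Fin J2 → ℝ
  /-- Assumption 3: convergence in probability of the stage-2 interventions -/
  A2_tendsto : ∀ j, TendstoInMeasure Pr (fun n => A2 n j) atTop (fun _ => a2 j)
  /-- Assumption 4: all interventions and errors take values in one compact set -/
  bound : ℝ
  A2_bdd : ∀ n j ω, ‖A2 n j ω‖ ≤ bound
  ε1_bdd : ∀ j i ω, |ε1 j i ω| ≤ bound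
  ε2n_bdd : ∀ n j i ω, |ε2n n j i ω| ≤ bound
  ε2_bdd : ∀ j i ω, |ε2 j i ω| ≤ bound
  /-- identical distribution within each error array -/
  ε1_ident : ∀ j i, IdentDistrib (ε1 j i) (ε1 j 0) Pr Pr
  ε2_ident : ∀ j i, IdentDistrib (ε2 j i) (ε2 j 0) Pr Pr
  ε1_mean : ∀ j i, ∫ ω, ε1 j i ω ∂Pr = 0
  ε2_mean : ∀ j i, ∫ ω, ε2 j i ω ∂Pr = 0
  ε1_var : ∀ j i, ∫ ω, (ε1 j i ω) ^ 2 ∂Pr = var1 j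
  ε2_var : ∀ j i, ∫ ω, (ε2 j i ω) ^ 2 ∂Pr = var2 j
  /-- all ε¹ and ε² variables are mutually independent -/
  ε_indep : iIndepFun
      (Sum.elim (fun p : Fin J1 × ℕ => fun ω => ε1 p.1 p.2 ω)
        (fun p : Fin J2 × ℕ => fun ω => ε2 p.1 p.2 ω)) Pr
  /-- the coupled ε² arrays are independent of (ε¹, (A_j^{(2,n)})_{j,n}) -/
  ε2_indep_rest : IndepFun
      (fun ω => (fun p : Fin J2 × ℕ => ε2 p.1 p.2 ω))
      (fun ω => ((fun p : Fin J1 × ℕ => ε1 p.1 p.2 ω),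
        (fun q : ℕ × Fin J2 => A2 q.1 q.2 ω))) Pr
  /-- Assumption 5: joint-law equality between realized and coupled errors -/
  jointLaw : ∀ n,
    Measure.map (fun ω => ((fun p : Fin J1 × ℕ => ε1 p.1 p.2 ω),
        (fun j => A2 n j ω), (fun p : Fin J2 × ℕ => ε2n n p.1 p.2 ω))) Pr
    = Measure.map (fun ω => ((fun p : Fin J1 × ℕ => ε1 p.1 p.2 ω),
        (fun j => A2 n j ω), (fun p : Fin J2 × ℕ => ε2 p.1 p.2 ω))) Pr

namespace LagoSetup

variable {Ω : Type} [MeasurableSpace Ω] {Pr : Measure Ω} {J1 J2 P Q : ℕ}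

/-- stage-1 design vectors x_j^{(1)} = (1, a_j^{(1)}, z_j^{(1)}) -/
def x1v (S : LagoSetup Ω Pr J1 J2 P Q) (j : Fin J1) : EuclideanSpace ℝ (Fin (1 + P + Q)) :=
  designVec (S.a1 j) (S.z1 j)

/-- limit stage-2 design vectors x_j^{(2)} = (1, a_j^{(2)}, z_j^{(2)}) -/
def x2v (S : LagoSetup Ω Pr J1 J2 P Q) (j : Fin J2) : EuclideanSpace ℝ (Fin (1 + P + Q)) :=
  designVec (S.a2 j) (S.z2 j)

/-- random stage-2 design vectors X_j^{(2,n)} = (1, A_j^{(2,n)}, z_j^{(2)}) -/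
def X2v (S : LagoSetup Ω Pr J1 J2 P Q) (n : ℕ) (j : Fin J2) (ω : Ω) :
    EuclideanSpace ℝ (Fin (1 + P + Q)) :=
  designVec (S.A2 n j ω) (S.z2 j)

/-- The LAGO estimating function U_n(β). -/
def U (S : LagoSetup Ω Pr J1 J2 P Q) (n : ℕ) (β : EuclideanSpace ℝ (Fin (1 + P + Q))) (ω : Ω) :
    EuclideanSpace ℝ (Fin (1 + P + Q)) :=
  (n : ℝ)⁻¹ •
    ((∑ j, ∑ i ∈ Finset.range (S.n1 n j),
        (deriv S.h ⟪β, S.x1v j⟫ *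
          (S.h ⟪S.βstar, S.x1v j⟫ + S.ε1 j i ω - S.h ⟪β, S.x1v j⟫)) • S.x1v j) +
      (∑ j, ∑ i ∈ Finset.range (S.n2 n j),
        (deriv S.h ⟪β, S.X2v n j ω⟫ *
          (S.h ⟪S.βstar, S.X2v n j ω⟫ + S.ε2n n j i ω - S.h ⟪β, S.X2v n j ω⟫)) •
          S.X2v n j ω))

/-- The deterministic limit u(β) of the estimating function. -/
def uLim (S : LagoSetup Ω Pr J1 J2 P Q) (β : EuclideanSpace ℝ (Fin (1 + P + Q))) :
    EuclideanSpace ℝ (Fin (1 + P + Q)) :=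
  (∑ j, (S.α1 j * deriv S.h ⟪β, S.x1v j⟫ *
      (S.h ⟪S.βstar, S.x1v j⟫ - S.h ⟪β, S.x1v j⟫)) • S.x1v j) +
    (∑ j, (S.α2 j * deriv S.h ⟪β, S.x2v j⟫ *
      (S.h ⟪S.βstar, S.x2v j⟫ - S.h ⟪β, S.x2v j⟫)) • S.x2v j)

/-- The limiting Jacobian matrix J(β*). -/
def Jmat (S : LagoSetup Ω Pr J1 J2 P Q) : Matrix (Fin (1 + P + Q)) (Fin (1 + P + Q)) ℝ :=
  Matrix.of fun p q =>
    (∑ j, S.α1 j * (deriv S.h ⟪S.βstar, S.x1v j⟫) ^ 2 * (S.x1v j p * S.x1v j q)) +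
      (∑ j, S.α2 j * (deriv S.h ⟪S.βstar, S.x2v j⟫) ^ 2 * (S.x2v j p * S.x2v j q))

/-- The limiting score covariance matrix V(β*). -/
def Vmat (S : LagoSetup Ω Pr J1 J2 P Q) : Matrix (Fin (1 + P + Q)) (Fin (1 + P + Q)) ℝ :=
  Matrix.of fun p q =>
    (∑ j, S.α1 j * S.var1 j * (deriv S.h ⟪S.βstar, S.x1v j⟫) ^ 2 * (S.x1v j p * S.x1v j q)) +
      (∑ j, S.α2 j * S.var2 j * (deriv S.h ⟪S.βstar, S.x2v j⟫) ^ 2 * (S.x2v j p * S.x2v j q))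

end LagoSetup

/-- `μ` is the centered Gaussian law on ℝ^d with covariance matrix `C`
(characterized via all one-dimensional projections, Cramér–Wold). -/
def IsCenteredGaussianLaw {d : ℕ} (μ : Measure (EuclideanSpace ℝ (Fin d)))
    (C : Matrix (Fin d) (Fin d) ℝ) : Prop :=
  IsProbabilityMeasure μ ∧
    ∀ l : EuclideanSpace ℝ (Fin d),
      Measure.map (fun v => ⟪l, v⟫) μ =
        gaussianReal 0 (Real.toNNReal (∑ p, ∑ q, l p * C p q * l q))

/-- Convergence in distribution: weak convergence of the laws. -/
def TendstoInDistribution {Ω : Type} [MeasurableSpace Ω] {E : Type*}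
    [MeasurableSpace E] [TopologicalSpace E]
    (X : ℕ → Ω → E) (Pr : Measure Ω) (μ : Measure E) : Prop :=
  ∀ f : BoundedContinuousFunction E ℝ,
    Tendsto (fun n => ∫ ω, f (X n ω) ∂Pr) atTop (𝓝 (∫ x, f x ∂μ))


section UniformConvergenceInMeasure

variable {ι Ω E F : Type*} [MeasurableSpace Ω]

/-- The events need not be measurable: `μ` is applied to them as an outer measure. -/
def TendstoUniformlyOnInMeasure [Dist F] (μ : Measure Ω) (U : ι → E → Ω → F) (u : E → F)
    (s : Set E) (l : Filter ι) : Prop :=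
  ∀ ε > 0, Tendsto (fun i => μ {ω | ∃ x ∈ s, ε ≤ dist (U i x ω) (u x)}) l (𝓝 0)

variable {μ : Measure Ω} {l : Filter ι}

lemma tendsto_measure_of_subset_union {s a b : ι → Set Ω} (hs : ∀ i, s i ⊆ a i ∪ b i)
    (ha : Tendsto (fun i => μ (a i)) l (𝓝 0)) (hb : Tendsto (fun i => μ (b i)) l (𝓝 0)) :
    Tendsto (fun i => μ (s i)) l (𝓝 0) := by
  have hab : Tendsto (fun i => μ (a i) + μ (b i)) l (𝓝 0) := by simpa using ha.add hb
  exact tendsto_of_tendsto_of_tendsto_of_le_of_le tendsto_const_nhds hab (fun _ => zero_le)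
    fun i => (measure_mono (hs i)).trans (measure_union_le _ _)

lemma Filter.Tendsto.tendstoInMeasure [PseudoMetricSpace E] {r : ι → E} {c : E}
    (hr : Tendsto r l (𝓝 c)) : TendstoInMeasure μ (fun i _ => r i) l fun _ => c := by
  rw [tendstoInMeasure_iff_dist]
  intro ε hε
  refine tendsto_const_nhds.congr' ?_
  filter_upwards [hr (Metric.ball_mem_nhds c hε)] with i hi
  simp [not_le.mpr (Metric.mem_ball.mp hi)]

lemma MeasureTheory.TendstoInMeasure.of_identDistrib {Ω' : Type*} [MeasurableSpace Ω']
    {ν : Measure Ω'} [PseudoMetricSpace E] [MeasurableSpace E] [OpensMeasurableSpace E]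
    {X : ι → Ω → E} {Y : ι → Ω' → E} {c : E} (hXY : ∀ i, IdentDistrib (X i) (Y i) μ ν)
    (hY : TendstoInMeasure ν Y l fun _ => c) : TendstoInMeasure μ X l fun _ => c := by
  rw [tendstoInMeasure_iff_dist] at hY ⊢
  intro ε hε
  have hs : MeasurableSet {x : E | ε ≤ dist x c} :=
    (isClosed_le continuous_const (continuous_id.dist continuous_const)).measurableSet
  exact (hY ε hε).congr fun i => ((hXY i).measure_mem_eq hs).symm

lemma MeasureTheory.TendstoInMeasure.tendstoUniformlyOnInMeasure_comp [PseudoMetricSpace E]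
    {X : Type*} [PseudoMetricSpace X] [ProperSpace X] [PseudoMetricSpace F] {G : E × X → F}
    (hG : Continuous G) {s : Set E}
    (hs : IsCompact s) {A : ι → Ω → X} {a : X} (hA : TendstoInMeasure μ A l fun _ => a) :
    TendstoUniformlyOnInMeasure μ (fun i x ω => G (x, A i ω)) (fun x => G (x, a)) s l := by
  intro ε hε
  obtain ⟨δ, hδ, hGδ⟩ := Metric.uniformContinuousOn_iff.mp
    ((hs.prod (isCompact_closedBall a 1)).uniformContinuousOn_of_continuous hG.continuousOn) ε hε
  refine tendsto_of_tendsto_of_tendsto_of_le_of_le tendsto_const_nhds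
    (tendstoInMeasure_iff_dist.mp hA (min δ 1) (by positivity)) (fun _ => zero_le)
    fun i => measure_mono ?_
  rintro ω ⟨x, hx, hεx⟩
  by_contra hω
  simp only [Set.mem_ofPred_eq, not_le, lt_min_iff] at hω
  obtain ⟨hωδ, hω1⟩ := hω
  refine (hGδ (x, A i ω) ⟨hx, Metric.mem_closedBall.mpr hω1.le⟩ (x, a)
    ⟨hx, Metric.mem_closedBall_self zero_le_one⟩ ?_).not_ge hεx
  simpa [Prod.dist_eq] using hωδ

namespace TendstoUniformlyOnInMeasure

variable [SeminormedAddCommGroup F] {U V : ι → E → Ω → F} {u v : E → F} {s : Set E}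

protected lemma congr (h : TendstoUniformlyOnInMeasure μ U u s l)
    (hUV : ∀ i x ω, U i x ω = V i x ω) (huv : ∀ x, u x = v x) :
    TendstoUniformlyOnInMeasure μ V v s l := by
  obtain rfl : U = V := funext fun i => funext fun x => funext (hUV i x)
  obtain rfl : u = v := funext huv
  exact h

protected lemma add (hU : TendstoUniformlyOnInMeasure μ U u s l)
    (hV : TendstoUniformlyOnInMeasure μ V v s l) :
    TendstoUniformlyOnInMeasure μ (fun i x ω => U i x ω + V i x ω) (fun x => u x + v x) s l := by
  intro ε hε
  refine tendsto_measure_of_subset_union (fun i => ?_) (hU (ε / 2) (half_pos hε))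
    (hV (ε / 2) (half_pos hε))
  rintro ω ⟨x, hx, hεx⟩
  have htri := dist_add_add_le (U i x ω) (V i x ω) (u x) (v x)
  by_cases hUx : ε / 2 ≤ dist (U i x ω) (u x)
  · exact Or.inl ⟨x, hx, hUx⟩
  · exact Or.inr ⟨x, hx, by linarith⟩

lemma finset_sum {κ : Type*} (t : Finset κ) {U : κ → ι → E → Ω → F} {u : κ → E → F}
    (h : ∀ k ∈ t, TendstoUniformlyOnInMeasure μ (U k) (u k) s l) :
    TendstoUniformlyOnInMeasure μ (fun i x ω => ∑ k ∈ t, U k i x ω) (fun x => ∑ k ∈ t, u k x)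
      s l := by
  classical
  induction t using Finset.induction_on with
  | empty => intro ε hε; simp [not_le.mpr hε, tendsto_const_nhds]
  | insert k t hk ih =>
    simp only [Finset.sum_insert hk]
    exact (h k (Finset.mem_insert_self k t)).add
      (ih fun k' hk' => h k' (Finset.mem_insert_of_mem hk'))

variable [NormedSpace ℝ F]

protected lemma smul {X : ι → Ω → ℝ} {c : ℝ} (hX : TendstoInMeasure μ X l fun _ => c)
    (hU : TendstoUniformlyOnInMeasure μ U u s l) {C : ℝ} (hu : ∀ x ∈ s, ‖u x‖ ≤ C) :
    TendstoUniformlyOnInMeasure μ (fun i x ω => X i ω • U i x ω) (fun x => c • u x) s l := by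
  intro ε hε
  obtain ⟨η, hη, hη1, hηε⟩ : ∃ η > 0, η ≤ 1 ∧ η * (1 + |c| + |C|) < ε := by
    have hK : 0 < 1 + |c| + |C| := by positivity
    refine ⟨min 1 (ε / (2 * (1 + |c| + |C|))), by positivity, min_le_left _ _, ?_⟩
    calc _ ≤ ε / (2 * (1 + |c| + |C|)) * (1 + |c| + |C|) := by gcongr; exact min_le_right _ _
      _ = ε / 2 := by field_simp
      _ < ε := half_lt_self hε
  refine tendsto_measure_of_subset_union (fun i => ?_) (tendstoInMeasure_iff_dist.mp hX η hη)
    (hU η hη)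
  rintro ω ⟨x, hx, hεx⟩
  by_contra hω
  simp only [Set.mem_union, Set.mem_ofPred_eq, not_or, not_le, not_exists, not_and] at hω
  obtain ⟨hXc, hUu⟩ := hω
  replace hUu := hUu x hx
  rw [Real.dist_eq] at hXc
  rw [dist_eq_norm] at hUu hεx
  have hux : ‖u x‖ ≤ |C| := (hu x hx).trans (le_abs_self C)
  have : ‖X i ω • U i x ω - c • u x‖ ≤ η * (1 + |c| + |C|) := calc
    _ = ‖(X i ω - c) • (U i x ω - u x) + (X i ω - c) • u x + c • (U i x ω - u x)‖ := by
        congr 1; module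
    _ ≤ |X i ω - c| * ‖U i x ω - u x‖ + |X i ω - c| * ‖u x‖ + |c| * ‖U i x ω - u x‖ := by
        refine norm_add₃_le.trans_eq ?_
        simp only [norm_smul, Real.norm_eq_abs]
    _ ≤ 1 * η + η * |C| + |c| * η := by gcongr; linarith
    _ = η * (1 + |c| + |C|) := by ring
  linarith

end TendstoUniformlyOnInMeasure

lemma TendstoUniformlyOnInMeasure.tendstoInMeasure_of_wellSeparated
    [SeminormedAddCommGroup E] [SeminormedAddCommGroup F] {U : ι → E → Ω → F} {u : E → F}
    {s : Set E} {x₀ : E} (hU : TendstoUniformlyOnInMeasure μ U u s l)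
    (hsep : ∀ ε > (0 : ℝ), ∃ c > (0 : ℝ), ∀ x ∈ s, ε ≤ ‖x - x₀‖ → c ≤ ‖u x‖)
    {X : ι → Ω → E} (hXs : ∀ i ω, X i ω ∈ s) (hX : ∀ i, ∀ᵐ ω ∂μ, U i (X i ω) ω = 0) :
    TendstoInMeasure μ X l fun _ => x₀ := by
  rw [tendstoInMeasure_iff_dist]
  intro δ hδ
  obtain ⟨c, hc, hsepδ⟩ := hsep δ hδ
  refine tendsto_of_tendsto_of_tendsto_of_le_of_le tendsto_const_nhds (hU c hc)
    (fun _ => zero_le) fun i => measure_mono_ae ?_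
  filter_upwards [hX i] with ω hω hδω
  refine ⟨X i ω, hXs i ω, ?_⟩
  rw [hω, dist_zero_left]
  exact hsepδ _ (hXs i ω) (by rwa [← dist_eq_norm])

end UniformConvergenceInMeasure

theorem tendstoInMeasure_sum_range_div {Ω : Type*} [MeasurableSpace Ω] {μ : Measure Ω}
    [IsFiniteMeasure μ] {X : ℕ → Ω → ℝ} (hint : Integrable (X 0) μ)
    (hindep : Pairwise fun i k => IndepFun (X i) (X k) μ)
    (hident : ∀ i, IdentDistrib (X i) (X 0) μ μ)
    {m : ℕ → ℕ} {α : ℝ} (hα : 0 < α) (hm : Tendsto (fun n => (m n : ℝ) / n) atTop (𝓝 α)) :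
    TendstoInMeasure μ (fun n ω => (∑ i ∈ Finset.range (m n), X i ω) / n) atTop
      fun _ => α * μ[X 0] := by
  have hm_top : Tendsto m atTop atTop := by
    rw [← tendsto_natCast_atTop_iff (R := ℝ)]
    refine (hm.pos_mul_atTop hα tendsto_natCast_atTop_atTop).congr' ?_
    filter_upwards [eventually_ne_atTop 0] with n hn
    field_simp
  have hmeas : ∀ n, AEStronglyMeasurable (fun ω => (∑ i ∈ Finset.range (m n), X i ω) / n) μ :=
    fun n => ((integrable_finsetSum _ fun i _ =>
      (hident i).integrable_iff.mpr hint).div_const _).aestronglyMeasurable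
  refine tendstoInMeasure_of_tendsto_ae hmeas ?_
  -- `S_{m n} / n = (m n / n) * (S_{m n} / m n)`, and the strong law applies along `m n → ∞`.
  filter_upwards [strong_law_ae_real X hint hindep hident] with ω hω
  refine (hm.mul (hω.comp hm_top)).congr' ?_
  filter_upwards [hm_top.eventually_ne_atTop 0] with n hn
  simp only [Function.comp_apply]
  field_simp

lemma continuous_designVec {P Q : ℕ} (z : EuclideanSpace ℝ (Fin Q)) :
    Continuous fun a : EuclideanSpace ℝ (Fin P) => designVec a z := by
  refine (EuclideanSpace.equiv (Fin (1 + P + Q)) ℝ).symm.continuous.comp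
    (continuous_pi fun i => ?_)
  refine Fin.addCases (fun i => ?_)
    (fun i => by simpa only [Fin.append_right] using continuous_const) i
  simp only [Fin.append_left]
  refine Fin.addCases (fun i => by simpa only [Fin.append_left] using continuous_const)
    (fun i => ?_) i
  simp only [Fin.append_right]
  exact (continuous_apply i).comp (EuclideanSpace.equiv (Fin P) ℝ).continuous

namespace LagoSetup

variable {Ω : Type} [MeasurableSpace Ω] {Pr : Measure Ω} {J1 J2 P Q : ℕ}
  (S : LagoSetup Ω Pr J1 J2 P Q)

def meanScore (β x : EuclideanSpace ℝ (Fin (1 + P + Q))) : EuclideanSpace ℝ (Fin (1 + P + Q)) :=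
  (deriv S.h ⟪β, x⟫ * (S.h ⟪S.βstar, x⟫ - S.h ⟪β, x⟫)) • x

def errorScore (β x : EuclideanSpace ℝ (Fin (1 + P + Q))) : EuclideanSpace ℝ (Fin (1 + P + Q)) :=
  deriv S.h ⟪β, x⟫ • x

section Continuity

variable {Y : Type*} [TopologicalSpace Y] {f g : Y → EuclideanSpace ℝ (Fin (1 + P + Q))}

lemma continuous_meanScore (hf : Continuous f) (hg : Continuous g) :
    Continuous fun y => S.meanScore (f y) (g y) := by
  have hh' : Continuous (deriv S.h) := S.h_smooth.continuous_deriv one_le_two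
  have hh : Continuous S.h := S.h_smooth.continuous
  unfold meanScore
  fun_prop

lemma continuous_errorScore (hf : Continuous f) (hg : Continuous g) :
    Continuous fun y => S.errorScore (f y) (g y) := by
  have hh' : Continuous (deriv S.h) := S.h_smooth.continuous_deriv one_le_two
  unfold errorScore
  fun_prop

end Continuity

lemma inv_smul_sum_score (n m : ℕ) (e : ℕ → ℝ) (β x : EuclideanSpace ℝ (Fin (1 + P + Q))) :
    (n : ℝ)⁻¹ • ∑ i ∈ Finset.range m,
        (deriv S.h ⟪β, x⟫ * (S.h ⟪S.βstar, x⟫ + e i - S.h ⟪β, x⟫)) • x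
      = ((m : ℝ) / n) • S.meanScore β x
        + ((∑ i ∈ Finset.range m, e i) / n) • S.errorScore β x := by
  simp only [meanScore, errorScore, ← Finset.sum_smul, smul_smul, ← add_smul]
  congr 1
  simp only [mul_add, add_sub_right_comm _ (e _), Finset.sum_add_distrib, Finset.sum_const,
    Finset.card_range, nsmul_eq_mul, ← Finset.mul_sum]
  ring

lemma U_eq (n : ℕ) (β : EuclideanSpace ℝ (Fin (1 + P + Q))) (ω : Ω) :
    S.U n β ω
      = (∑ j, (((S.n1 n j : ℝ) / n) • S.meanScore β (S.x1v j)
          + ((∑ i ∈ Finset.range (S.n1 n j), S.ε1 j i ω) / n) • S.errorScore β (S.x1v j)))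
        + ∑ j, (((S.n2 n j : ℝ) / n) • S.meanScore β (S.X2v n j ω)
          + ((∑ i ∈ Finset.range (S.n2 n j), S.ε2n n j i ω) / n)
            • S.errorScore β (S.X2v n j ω)) := by
  rw [U, smul_add, Finset.smul_sum, Finset.smul_sum]
  simp only [inv_smul_sum_score]

lemma uLim_eq (β : EuclideanSpace ℝ (Fin (1 + P + Q))) :
    S.uLim β
      = (∑ j, S.α1 j • S.meanScore β (S.x1v j)) + ∑ j, S.α2 j • S.meanScore β (S.x2v j) := by
  simp only [uLim, meanScore, smul_smul, mul_assoc]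

lemma tendstoUniformlyOnInMeasure_centerScore {X : Type*} [PseudoMetricSpace X] [ProperSpace X]
    {d : X → EuclideanSpace ℝ (Fin (1 + P + Q))} (hd : Continuous d) {A : ℕ → Ω → X} {a : X}
    (hA : TendstoInMeasure Pr A atTop fun _ => a) {r : ℕ → ℝ} {α : ℝ}
    (hr : Tendsto r atTop (𝓝 α)) {e : ℕ → Ω → ℝ} (he : TendstoInMeasure Pr e atTop fun _ => 0) :
    TendstoUniformlyOnInMeasure Pr
      (fun n β ω => r n • S.meanScore β (d (A n ω)) + e n ω • S.errorScore β (d (A n ω)))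
      (fun β => α • S.meanScore β (d a)) S.B atTop := by
  have hmean : Continuous fun p : EuclideanSpace ℝ (Fin (1 + P + Q)) × X =>
      S.meanScore p.1 (d p.2) :=
    S.continuous_meanScore continuous_fst (hd.comp continuous_snd)
  have herror : Continuous fun p : EuclideanSpace ℝ (Fin (1 + P + Q)) × X =>
      S.errorScore p.1 (d p.2) :=
    S.continuous_errorScore continuous_fst (hd.comp continuous_snd)
  obtain ⟨Cm, hCm⟩ := S.B_compact.exists_bound_of_continuousOn
    (S.continuous_meanScore continuous_id continuous_const (g := fun _ => d a)).continuousOn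
  obtain ⟨Ce, hCe⟩ := S.B_compact.exists_bound_of_continuousOn
    (S.continuous_errorScore continuous_id continuous_const (g := fun _ => d a)).continuousOn
  have hmean_lim := (hA.tendstoUniformlyOnInMeasure_comp hmean S.B_compact).smul
    (hr.tendstoInMeasure (μ := Pr)) hCm
  have herror_lim := (hA.tendstoUniformlyOnInMeasure_comp herror S.B_compact).smul he hCe
  exact (hmean_lim.add herror_lim).congr (fun _ _ _ => rfl) fun β => by simp

lemma identDistrib_ε2n_ε2 (n : ℕ) :
    IdentDistrib (fun ω => fun p : Fin J2 × ℕ => S.ε2n n p.1 p.2 ω)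
      (fun ω => fun p : Fin J2 × ℕ => S.ε2 p.1 p.2 ω) Pr Pr := by
  have hmeas : ∀ ε : Fin J2 × ℕ → Ω → ℝ, (∀ p, Measurable (ε p)) →
      Measurable fun ω => ((fun p : Fin J1 × ℕ => S.ε1 p.1 p.2 ω), (fun j => S.A2 n j ω),
        fun p : Fin J2 × ℕ => ε p ω) := fun ε hε =>
    (measurable_pi_lambda _ fun p : Fin J1 × ℕ => S.meas_ε1 p.1 p.2).prodMk
      ((measurable_pi_lambda _ fun j => S.measA2 n j).prodMk (measurable_pi_lambda _ hε))
  exact (IdentDistrib.mk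
    (hmeas (fun p => S.ε2n n p.1 p.2) fun p => S.meas_ε2n n p.1 p.2).aemeasurable
    (hmeas (fun p => S.ε2 p.1 p.2) fun p => S.meas_ε2 p.1 p.2).aemeasurable
    (S.jointLaw n)).comp (measurable_snd.comp measurable_snd)

variable [IsFiniteMeasure Pr]

lemma tendstoInMeasure_errorMean₁ (j : Fin J1) :
    TendstoInMeasure Pr (fun n ω => (∑ i ∈ Finset.range (S.n1 n j), S.ε1 j i ω) / n) atTop
      fun _ => 0 := by
  have hint : Integrable (S.ε1 j 0) Pr :=
    .of_bound (S.meas_ε1 j 0).aestronglyMeasurable S.bound (ae_of_all _ (S.ε1_bdd j 0))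
  have hindep : Pairwise fun i k => IndepFun (S.ε1 j i) (S.ε1 j k) Pr := fun i k hik =>
    S.ε_indep.indepFun (show (Sum.inl (j, i) : (Fin J1 × ℕ) ⊕ (Fin J2 × ℕ)) ≠ .inl (j, k) by
      simpa using hik)
  simpa [S.ε1_mean j 0] using
    tendstoInMeasure_sum_range_div hint hindep (S.ε1_ident j) (S.α1_pos j) (S.α1_lim j)

lemma tendstoInMeasure_coupledErrorMean₂ (j : Fin J2) :
    TendstoInMeasure Pr (fun n ω => (∑ i ∈ Finset.range (S.n2 n j), S.ε2 j i ω) / n) atTop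
      fun _ => 0 := by
  have hint : Integrable (S.ε2 j 0) Pr :=
    .of_bound (S.meas_ε2 j 0).aestronglyMeasurable S.bound (ae_of_all _ (S.ε2_bdd j 0))
  have hindep : Pairwise fun i k => IndepFun (S.ε2 j i) (S.ε2 j k) Pr := fun i k hik =>
    S.ε_indep.indepFun (show (Sum.inr (j, i) : (Fin J1 × ℕ) ⊕ (Fin J2 × ℕ)) ≠ .inr (j, k) by
      simpa using hik)
  simpa [S.ε2_mean j 0] using
    tendstoInMeasure_sum_range_div hint hindep (S.ε2_ident j) (S.α2_pos j) (S.α2_lim j)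

lemma tendstoInMeasure_errorMean₂ (j : Fin J2) :
    TendstoInMeasure Pr (fun n ω => (∑ i ∈ Finset.range (S.n2 n j), S.ε2n n j i ω) / n) atTop
      fun _ => 0 :=
  TendstoInMeasure.of_identDistrib
    (fun n => (S.identDistrib_ε2n_ε2 n).comp
      (u := fun e : Fin J2 × ℕ → ℝ => (∑ i ∈ Finset.range (S.n2 n j), e (j, i)) / n)
      ((Finset.measurable_sum _ fun i _ => measurable_pi_apply (j, i)).div_const _))
    (S.tendstoInMeasure_coupledErrorMean₂ j)

lemma tendstoUniformlyOnInMeasure_U : TendstoUniformlyOnInMeasure Pr S.U S.uLim S.B atTop := by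
  refine TendstoUniformlyOnInMeasure.congr ?_ (fun n β ω => (S.U_eq n β ω).symm)
    (fun β => (S.uLim_eq β).symm)
  refine .add (.finset_sum _ fun j _ => ?_) (.finset_sum _ fun j _ => ?_)
  · exact S.tendstoUniformlyOnInMeasure_centerScore continuous_id
      tendsto_const_nhds.tendstoInMeasure (S.α1_lim j) (S.tendstoInMeasure_errorMean₁ j)
  · exact S.tendstoUniformlyOnInMeasure_centerScore (continuous_designVec (S.z2 j))
      (S.A2_tendsto j) (S.α2_lim j) (S.tendstoInMeasure_errorMean₂ j)

end LagoSetup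

theorem lago_consistency_general
    {Ω : Type} [MeasurableSpace Ω] {Pr : Measure Ω} [IsProbabilityMeasure Pr]
    {J1 J2 P Q : ℕ} (S : LagoSetup Ω Pr J1 J2 P Q)
    (hwellsep : ∀ ε > (0 : ℝ), ∃ c > (0 : ℝ),
      ∀ β ∈ S.B, ε ≤ ‖β - S.βstar‖ → c ≤ ‖S.uLim β‖)
    (βhat : ℕ → Ω → EuclideanSpace ℝ (Fin (1 + P + Q)))
    (hβmem : ∀ n ω, βhat n ω ∈ S.B)
    (hβzero : ∀ n, ∀ᵐ ω ∂Pr, S.U n (βhat n ω) ω = 0) :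
    TendstoInMeasure Pr (fun n ω => βhat n ω) atTop (fun _ => S.βstar) :=
  S.tendstoUniformlyOnInMeasure_U.tendstoInMeasure_of_wellSeparated hwellsep hβmem hβzero

/-- **Theorem 1 (Consistency of the LAGO GLM estimator).**
If β* is a well-separated zero of the population estimating function u, and β̂_n are
B-valued measurable random vectors solving U_n(β̂_n) = 0 a.s., then β̂_n → β* in probability. -/
theorem lago_consistency
    {Ω : Type} [MeasurableSpace Ω] {Pr : Measure Ω} [IsProbabilityMeasure Pr]
    {J1 J2 P Q : ℕ} (S : LagoSetup Ω Pr J1 J2 P Q)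
    (hwellsep : ∀ ε > (0 : ℝ), ∃ c > (0 : ℝ),
      ∀ β ∈ S.B, ε ≤ ‖β - S.βstar‖ → c ≤ ‖S.uLim β‖)
    (βhat : ℕ → Ω → EuclideanSpace ℝ (Fin (1 + P + Q)))
    (hβmeas : ∀ n, Measurable (βhat n))
    (hβmem : ∀ n ω, βhat n ω ∈ S.B)
    (hβzero : ∀ n, ∀ᵐ ω ∂Pr, S.U n (βhat n ω) ω = 0) :
    TendstoInMeasure Pr (fun n ω => βhat n ω) atTop (fun _ => S.βstar) :=
  lago_consistency_general S hwellsep βhat hβmem hβzero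

end
end

section
/- Uniform convergence of the LAGO estimating function (equation (5)). In the two-stage LAGO setup, sup_{β ∈ B} ‖U_n(β) − u(β)‖ → 0 in probability as n → ∞ (the supremum over the compact set B is a measurable random variable because β ↦ U_n(β) − u(β) is continuous). -/
open MeasureTheory ProbabilityTheory Filter
open scoped RealInnerProductSpace BigOperators NNReal Topology ENNReal

noncomputable section

/-!
Center by center, `U_n(β) - u(β)` splits as
`(m/n - α) g(A_n, β) + α (g(A_n, β) - g(a, β)) + N_n k(A_n, β)`,
where `m` is the center's sample size, `A_n → a` its intervention, `N_n = n⁻¹ ∑_{i<m} ε_i` its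
error average, and `g`, `k` are continuous. The outer terms are scalars tending to zero in
probability times functions bounded on the compact set where `(A_n, β)` lives; the middle term is
small uniformly in `β ∈ B` once `A_n` is close to `a`, by uniform continuity on compacta.
`N_n → 0` in probability by Chebyshev's inequality; in stage 2 the realized errors have, by
Assumption 5, the law of the i.i.d. coupled ones.
-/

section UniformlyInMeasure

variable {Ω ι α E : Type*} [MeasurableSpace Ω] {μ : Measure Ω} {l : Filter ι}

/-- `μ` is applied as an outer measure, so the events need not be measurable. -/
def TendstoZeroUniformlyOnInMeasure [Norm E] (μ : Measure Ω) (F : ι → α → Ω → E) (l : Filter ι)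
    (s : Set α) : Prop :=
  ∀ δ > 0, Tendsto (fun i => μ {ω | ∃ x ∈ s, δ ≤ ‖F i x ω‖}) l (𝓝 0)

lemma tendsto_measure_zero_of_subset {s t : ι → Set Ω} (hst : ∀ i, s i ⊆ t i)
    (ht : Tendsto (fun i => μ (t i)) l (𝓝 0)) : Tendsto (fun i => μ (s i)) l (𝓝 0) :=
  tendsto_of_tendsto_of_tendsto_of_le_of_le tendsto_const_nhds ht (fun _ => zero_le)
    fun i => measure_mono (hst i)

lemma tendstoInMeasure_const_of_tendsto {X : Type*} [PseudoMetricSpace X] {c : ι → X} {a : X}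
    (hc : Tendsto c l (𝓝 a)) : TendstoInMeasure μ (fun i (_ : Ω) => c i) l (fun _ => a) := by
  rw [tendstoInMeasure_iff_dist]
  intro δ hδ
  refine tendsto_const_nhds.congr' ?_
  filter_upwards [Metric.tendsto_nhds.mp hc δ hδ] with i hi
  simp [not_le.mpr hi]

variable [NormedAddCommGroup E] {s : Set α}

lemma TendstoZeroUniformlyOnInMeasure.add {F G : ι → α → Ω → E}
    (hF : TendstoZeroUniformlyOnInMeasure μ F l s) (hG : TendstoZeroUniformlyOnInMeasure μ G l s) :
    TendstoZeroUniformlyOnInMeasure μ (fun i x ω => F i x ω + G i x ω) l s := by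
  intro δ hδ
  refine tendsto_of_tendsto_of_tendsto_of_le_of_le tendsto_const_nhds
    (by simpa using (hF _ (half_pos hδ)).add (hG _ (half_pos hδ))) (fun _ => zero_le)
    fun i => (measure_mono fun ω => ?_).trans (measure_union_le _ _)
  rintro ⟨x, hx, hδx⟩
  by_contra h
  simp only [Set.mem_union, Set.mem_ofPred_eq, not_or, not_exists, not_and, not_le] at h
  linarith [norm_add_le (F i x ω) (G i x ω), h.1 x hx, h.2 x hx]

lemma tendstoZeroUniformlyOnInMeasure_finset_sum {κ : Type*} (t : Finset κ)
    {F : κ → ι → α → Ω → E} (hF : ∀ j ∈ t, TendstoZeroUniformlyOnInMeasure μ (F j) l s) :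
    TendstoZeroUniformlyOnInMeasure μ (fun i x ω => ∑ j ∈ t, F j i x ω) l s := by
  classical
  induction t using Finset.induction_on with
  | empty => intro δ hδ; simpa [not_le.mpr hδ] using tendsto_const_nhds
  | insert j t hj ih =>
    simp_rw [Finset.sum_insert hj]
    exact (hF j (Finset.mem_insert_self j t)).add
      (ih fun k hk => hF k (Finset.mem_insert_of_mem hk))

lemma TendstoZeroUniformlyOnInMeasure.tendstoInMeasure_sSup {F : ι → α → Ω → E}
    (hF : TendstoZeroUniformlyOnInMeasure μ F l s) :
    TendstoInMeasure μ (fun i ω => sSup ((fun x => ‖F i x ω‖) '' s)) l (fun _ => 0) := by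
  rw [tendstoInMeasure_iff_dist]
  intro δ hδ
  refine tendsto_measure_zero_of_subset (fun i ω hω => ?_) (hF (δ / 2) (half_pos hδ))
  by_contra h
  simp only [Set.mem_ofPred_eq, not_exists, not_and, not_le] at h hω
  have hle : sSup ((fun x => ‖F i x ω‖) '' s) ≤ δ / 2 :=
    Real.sSup_le (by rintro _ ⟨x, hx, rfl⟩; exact (h x hx).le) (by positivity)
  have hnonneg : 0 ≤ sSup ((fun x => ‖F i x ω‖) '' s) :=
    Real.sSup_nonneg (by rintro _ ⟨x, -, rfl⟩; exact norm_nonneg _)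
  rw [Real.dist_0_eq_abs, abs_of_nonneg hnonneg] at hω
  linarith

lemma MeasureTheory.TendstoInMeasure.tendstoZeroUniformlyOnInMeasure_sub {X Y : Type*}
    [PseudoMetricSpace X] [TopologicalSpace Y] {g : X → Y → E}
    (hg : Continuous (Function.uncurry g)) {B : Set Y} (hB : IsCompact B) {A : ι → Ω → X}
    {a : X} (hA : TendstoInMeasure μ A l (fun _ => a)) :
    TendstoZeroUniformlyOnInMeasure μ (fun i y ω => g (A i ω) y - g a y) l B := by
  intro δ hδ
  obtain ⟨v, hv, hvB⟩ := hB.mem_uniformity_of_prod hg.continuousOn (Set.mem_univ a)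
    (Metric.dist_mem_uniformity hδ)
  obtain ⟨η, hη, hball⟩ := Metric.mem_nhds_iff.mp (nhdsWithin_univ a ▸ hv)
  refine tendsto_measure_zero_of_subset (fun i ω ⟨y, hy, hδy⟩ => ?_)
    (tendstoInMeasure_iff_dist.mp hA η hη)
  by_contra h
  have hclose : dist (g (A i ω) y) (g a y) < δ :=
    hvB _ (hball (Metric.mem_ball.mpr (not_le.mp h))) y hy
  rw [dist_eq_norm] at hclose
  linarith

variable [NormedSpace ℝ E]

lemma MeasureTheory.TendstoInMeasure.smul_tendstoZeroUniformlyOnInMeasure {N : ι → Ω → ℝ}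
    {G : ι → α → Ω → E} {C : ℝ} (hN : TendstoInMeasure μ N l (fun _ => 0))
    (hG : ∀ i, ∀ x ∈ s, ∀ ω, ‖G i x ω‖ ≤ C) :
    TendstoZeroUniformlyOnInMeasure μ (fun i x ω => N i ω • G i x ω) l s := by
  intro δ hδ
  have hM : 0 < |C| + 1 := by positivity
  refine tendsto_measure_zero_of_subset (fun i ω ⟨x, hx, hδx⟩ => ?_)
    (tendstoInMeasure_iff_dist.mp hN (δ / (|C| + 1)) (div_pos hδ hM))
  change δ / (|C| + 1) ≤ dist (N i ω) 0
  rw [Real.dist_0_eq_abs, div_le_iff₀ hM]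
  calc δ ≤ ‖N i ω • G i x ω‖ := hδx
    _ = |N i ω| * ‖G i x ω‖ := by rw [norm_smul, Real.norm_eq_abs]
    _ ≤ |N i ω| * (|C| + 1) := by gcongr; linarith [hG i x hx ω, le_abs_self C]

theorem tendstoZeroUniformlyOnInMeasure_smul_add_smul_sub_smul {X Y : Type*}
    [PseudoMetricSpace X] [TopologicalSpace Y] {g k : X → Y → E}
    (hg : Continuous (Function.uncurry g)) (hk : Continuous (Function.uncurry k)) {B : Set Y}
    (hB : IsCompact B) {K : Set X} (hK : IsCompact K) {A : ι → Ω → X} {a : X}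
    (hAK : ∀ i ω, A i ω ∈ K) (hA : TendstoInMeasure μ A l (fun _ => a)) {c : ι → ℝ} {α : ℝ}
    (hc : Tendsto c l (𝓝 α)) {N : ι → Ω → ℝ} (hN : TendstoInMeasure μ N l (fun _ => 0)) :
    TendstoZeroUniformlyOnInMeasure μ
      (fun i y ω => c i • g (A i ω) y + N i ω • k (A i ω) y - α • g a y) l B := by
  obtain ⟨Cg, hCg⟩ := (hK.prod hB).exists_bound_of_continuousOn hg.continuousOn
  obtain ⟨Ck, hCk⟩ := (hK.prod hB).exists_bound_of_continuousOn hk.continuousOn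
  have hdrift := (tendstoInMeasure_const_of_tendsto (μ := μ) (tendsto_sub_nhds_zero_iff.mpr hc)
    ).smul_tendstoZeroUniformlyOnInMeasure (G := fun i y ω => g (A i ω) y)
    fun i y hy ω => hCg (A i ω, y) ⟨hAK i ω, hy⟩
  have hshift := hA.tendstoZeroUniformlyOnInMeasure_sub (g := fun x y => α • g x y)
    (hg.const_smul α) hB
  have herror := hN.smul_tendstoZeroUniformlyOnInMeasure (G := fun i y ω => k (A i ω) y)
    fun i y hy ω => hCk (A i ω, y) ⟨hAK i ω, hy⟩
  convert (hdrift.add hshift).add herror using 4 with i y ω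
  rw [sub_smul]
  abel

end UniformlyInMeasure

section WeakLaw

variable {Ω : Type*} [MeasurableSpace Ω] {μ : Measure Ω}

theorem tendstoInMeasure_inv_mul_sum_range [IsProbabilityMeasure μ] {X : ℕ → Ω → ℝ} {b : ℝ}
    (hXm : ∀ i, Measurable (X i)) (hXb : ∀ i ω, |X i ω| ≤ b) (hX0 : ∀ i, μ[X i] = 0)
    (hind : Pairwise fun i j => IndepFun (X i) (X j) μ) {m : ℕ → ℕ} (hm : ∀ n, m n ≤ n) :
    TendstoInMeasure μ (fun (n : ℕ) ω => (n : ℝ)⁻¹ * ∑ i ∈ Finset.range (m n), X i ω) atTop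
      (fun _ => 0) := by
  have hXab : ∀ i, ∀ᵐ ω ∂μ, X i ω ∈ Set.Icc (-b) b :=
    fun i => ae_of_all _ fun ω => abs_le.mp (hXb i ω)
  have hL2 : ∀ i, MemLp (X i) 2 μ :=
    fun i => memLp_of_bounded (hXab i) (hXm i).aestronglyMeasurable 2
  have hvar : ∀ i, Var[X i; μ] ≤ b ^ 2 := fun i =>
    (variance_le_sq_of_bounded (hXab i) (hXm i).aemeasurable).trans_eq (by ring)
  set Y : ℕ → Ω → ℝ := fun (n : ℕ) ω => (n : ℝ)⁻¹ * ∑ i ∈ Finset.range (m n), X i ω with hY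
  have hYL2 : ∀ n, MemLp (Y n) 2 μ := fun n => (memLp_finsetSum _ fun i _ => hL2 i).const_mul _
  have hYmean : ∀ n, μ[Y n] = 0 := fun n => by
    simp [hY, integral_const_mul, integral_finsetSum _ fun i _ => (hL2 i).integrable one_le_two,
      hX0]
  have hYvar : ∀ n, Var[Y n; μ] ≤ b ^ 2 * (n : ℝ)⁻¹ := fun n => by
    rw [hY, variance_const_mul, ← Finset.sum_fn,
      IndepFun.variance_sum (fun i _ => hL2 i) fun i _ j _ hij => hind hij]
    calc (n : ℝ)⁻¹ ^ 2 * ∑ i ∈ Finset.range (m n), Var[X i; μ]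
        ≤ (n : ℝ)⁻¹ ^ 2 * (n * b ^ 2) := by
          grw [Finset.sum_le_sum fun i _ => hvar i, Finset.sum_const, Finset.card_range,
            nsmul_eq_mul, hm n]
      _ = b ^ 2 * (n : ℝ)⁻¹ := by
          rcases Nat.eq_zero_or_pos n with rfl | hn
          · simp
          · field_simp
  rw [tendstoInMeasure_iff_dist]
  intro δ hδ
  have hChebyshev : ∀ n, μ {ω | δ ≤ dist (Y n ω) 0}
      ≤ ENNReal.ofReal (b ^ 2 / δ ^ 2 * (n : ℝ)⁻¹) := fun n =>
    calc μ {ω | δ ≤ dist (Y n ω) 0} = μ {ω | δ ≤ |Y n ω - μ[Y n]|} := by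
          simp only [hYmean n, sub_zero, Real.dist_0_eq_abs]
      _ ≤ ENNReal.ofReal (Var[Y n; μ] / δ ^ 2) := meas_ge_le_variance_div_sq (hYL2 n) hδ
      _ ≤ ENNReal.ofReal (b ^ 2 / δ ^ 2 * (n : ℝ)⁻¹) := by
          rw [div_mul_eq_mul_div]
          gcongr
          exact hYvar n
  refine tendsto_of_tendsto_of_tendsto_of_le_of_le tendsto_const_nhds ?_ (fun _ => zero_le)
    hChebyshev
  simpa using ENNReal.tendsto_ofReal
    (tendsto_const_nhds.mul (tendsto_inv_atTop_nhds_zero_nat (𝕜 := ℝ)))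

theorem MeasureTheory.TendstoInMeasure.congr_identDistrib {ι E : Type*} {l : Filter ι}
    [PseudoMetricSpace E] [MeasurableSpace E] [OpensMeasurableSpace E] {f g : ι → Ω → E} {c : E}
    (hfg : ∀ i, IdentDistrib (f i) (g i) μ μ) (hg : TendstoInMeasure μ g l (fun _ => c)) :
    TendstoInMeasure μ f l (fun _ => c) := by
  rw [tendstoInMeasure_iff_dist] at hg ⊢
  intro δ hδ
  have hset : MeasurableSet {y : E | δ ≤ dist y c} :=
    (isClosed_le continuous_const (continuous_id.dist continuous_const)).measurableSet
  convert hg δ hδ using 2 with i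
  exact (hfg i).measure_mem_eq hset

end WeakLaw

section Score

variable {F : Type*} [NormedAddCommGroup F] [InnerProductSpace ℝ F] (h : ℝ → ℝ)

def meanGrad (x β : F) : F := deriv h ⟪β, x⟫ • x

def expectedScore (βstar x β : F) : F := (deriv h ⟪β, x⟫ * (h ⟪βstar, x⟫ - h ⟪β, x⟫)) • x

variable {h} {T : Type*} [TopologicalSpace T] {x β : T → F}

lemma Continuous.meanGrad (hh' : Continuous (deriv h)) (hx : Continuous x) (hβ : Continuous β) :
    Continuous fun t => meanGrad h (x t) (β t) :=
  (hh'.comp (hβ.inner hx)).smul hx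

lemma Continuous.expectedScore (hh : Continuous h) (hh' : Continuous (deriv h)) (βstar : F)
    (hx : Continuous x) (hβ : Continuous β) :
    Continuous fun t => expectedScore h βstar (x t) (β t) :=
  ((hh'.comp (hβ.inner hx)).mul
    ((hh.comp (continuous_const.inner hx)).sub (hh.comp (hβ.inner hx)))).smul hx

lemma inv_smul_sum_range_score (βstar x β : F) (e : ℕ → ℝ) (m n : ℕ) :
    (n : ℝ)⁻¹ • ∑ i ∈ Finset.range m, (deriv h ⟪β, x⟫ * (h ⟪βstar, x⟫ + e i - h ⟪β, x⟫)) • x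
      = ((m : ℝ) / n) • expectedScore h βstar x β
        + ((n : ℝ)⁻¹ * ∑ i ∈ Finset.range m, e i) • meanGrad h x β := by
  have hsplit : ∀ i, (deriv h ⟪β, x⟫ * (h ⟪βstar, x⟫ + e i - h ⟪β, x⟫)) • x
      = expectedScore h βstar x β + e i • meanGrad h x β := fun i => by
    simp only [expectedScore, meanGrad]
    match_scalars
    ring
  simp only [hsplit, Finset.sum_add_distrib, Finset.sum_const, Finset.card_range,
    ← Finset.sum_smul]
  match_scalars <;> ring

lemma mul_mul_smul_eq_smul_expectedScore (α : ℝ) (βstar x β : F) :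
    (α * deriv h ⟪β, x⟫ * (h ⟪βstar, x⟫ - h ⟪β, x⟫)) • x = α • expectedScore h βstar x β := by
  rw [expectedScore, smul_smul, mul_assoc]

end Score

namespace LagoSetup

variable {Ω : Type} [MeasurableSpace Ω] {Pr : Measure Ω} {J1 J2 P Q : ℕ}
  (S : LagoSetup Ω Pr J1 J2 P Q)

def stage1Deviation (n : ℕ) (j : Fin J1) (β : EuclideanSpace ℝ (Fin (1 + P + Q))) (ω : Ω) :
    EuclideanSpace ℝ (Fin (1 + P + Q)) :=
  ((S.n1 n j : ℝ) / n) • expectedScore S.h S.βstar (S.x1v j) β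
    + ((n : ℝ)⁻¹ * ∑ i ∈ Finset.range (S.n1 n j), S.ε1 j i ω) • meanGrad S.h (S.x1v j) β
    - S.α1 j • expectedScore S.h S.βstar (S.x1v j) β

def stage2Deviation (n : ℕ) (j : Fin J2) (β : EuclideanSpace ℝ (Fin (1 + P + Q))) (ω : Ω) :
    EuclideanSpace ℝ (Fin (1 + P + Q)) :=
  ((S.n2 n j : ℝ) / n) • expectedScore S.h S.βstar (S.X2v n j ω) β
    + ((n : ℝ)⁻¹ * ∑ i ∈ Finset.range (S.n2 n j), S.ε2n n j i ω) • meanGrad S.h (S.X2v n j ω) β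
    - S.α2 j • expectedScore S.h S.βstar (S.x2v j) β

lemma U_sub_uLim (n : ℕ) (β : EuclideanSpace ℝ (Fin (1 + P + Q))) (ω : Ω) :
    S.U n β ω - S.uLim β = ∑ j, S.stage1Deviation n j β ω + ∑ j, S.stage2Deviation n j β ω := by
  rw [U, uLim, smul_add, Finset.smul_sum, Finset.smul_sum]
  simp only [inv_smul_sum_range_score, mul_mul_smul_eq_smul_expectedScore, stage1Deviation,
    stage2Deviation, Finset.sum_sub_distrib]
  abel

lemma n1_le (n : ℕ) (j : Fin J1) : S.n1 n j ≤ n :=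
  (Finset.single_le_sum (fun _ _ => Nat.zero_le _) (Finset.mem_univ j)).trans
    ((Nat.le_add_right _ _).trans (S.sum_sizes n).le)

lemma n2_le (n : ℕ) (j : Fin J2) : S.n2 n j ≤ n :=
  (Finset.single_le_sum (fun _ _ => Nat.zero_le _) (Finset.mem_univ j)).trans
    ((Nat.le_add_left _ _).trans (S.sum_sizes n).le)

lemma identDistrib_stage2Errors (n : ℕ) :
    IdentDistrib (fun ω (p : Fin J2 × ℕ) => S.ε2n n p.1 p.2 ω)
      (fun ω (p : Fin J2 × ℕ) => S.ε2 p.1 p.2 ω) Pr Pr := by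
  have hε1 : Measurable fun ω (p : Fin J1 × ℕ) => S.ε1 p.1 p.2 ω :=
    measurable_pi_lambda _ fun p => S.meas_ε1 p.1 p.2
  have hA2 : Measurable fun ω j => S.A2 n j ω := measurable_pi_lambda _ fun j => S.measA2 n j
  have hε2n : Measurable fun ω (p : Fin J2 × ℕ) => S.ε2n n p.1 p.2 ω :=
    measurable_pi_lambda _ fun p => S.meas_ε2n n p.1 p.2
  have hε2 : Measurable fun ω (p : Fin J2 × ℕ) => S.ε2 p.1 p.2 ω :=
    measurable_pi_lambda _ fun p => S.meas_ε2 p.1 p.2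
  exact (IdentDistrib.mk (hε1.prodMk (hA2.prodMk hε2n)).aemeasurable
    (hε1.prodMk (hA2.prodMk hε2)).aemeasurable (S.jointLaw n)).comp measurable_snd.snd

lemma continuous_deriv_h : Continuous (deriv S.h) :=
  S.h_smooth.continuous_deriv (by norm_num)

lemma continuous_expectedScore_designVec (z : EuclideanSpace ℝ (Fin Q)) :
    Continuous fun p : EuclideanSpace ℝ (Fin P) × EuclideanSpace ℝ (Fin (1 + P + Q)) =>
      expectedScore S.h S.βstar (designVec p.1 z) p.2 :=
  Continuous.expectedScore S.h_smooth.continuous S.continuous_deriv_h S.βstar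
    ((continuous_designVec z).comp continuous_fst) continuous_snd

lemma continuous_meanGrad_designVec (z : EuclideanSpace ℝ (Fin Q)) :
    Continuous fun p : EuclideanSpace ℝ (Fin P) × EuclideanSpace ℝ (Fin (1 + P + Q)) =>
      meanGrad S.h (designVec p.1 z) p.2 :=
  Continuous.meanGrad S.continuous_deriv_h ((continuous_designVec z).comp continuous_fst)
    continuous_snd

variable [IsProbabilityMeasure Pr]

lemma tendstoInMeasure_stage1ErrorMean (j : Fin J1) :
    TendstoInMeasure Pr (fun (n : ℕ) ω => (n : ℝ)⁻¹ * ∑ i ∈ Finset.range (S.n1 n j), S.ε1 j i ω)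
      atTop (fun _ => 0) :=
  tendstoInMeasure_inv_mul_sum_range (S.meas_ε1 j) (S.ε1_bdd j) (S.ε1_mean j)
    (fun i k hik => S.ε_indep.indepFun (i := .inl (j, i)) (j := .inl (j, k)) (by simpa using hik))
    (fun n => S.n1_le n j)

lemma tendstoInMeasure_stage2ErrorMean (j : Fin J2) :
    TendstoInMeasure Pr
      (fun (n : ℕ) ω => (n : ℝ)⁻¹ * ∑ i ∈ Finset.range (S.n2 n j), S.ε2n n j i ω)
      atTop (fun _ => 0) :=
  (tendstoInMeasure_inv_mul_sum_range (S.meas_ε2 j) (S.ε2_bdd j) (S.ε2_mean j)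
      (fun i k hik => S.ε_indep.indepFun (i := .inr (j, i)) (j := .inr (j, k)) (by simpa using hik))
      (fun n => S.n2_le n j)).congr_identDistrib fun n =>
    (S.identDistrib_stage2Errors n).comp (by fun_prop)
      (u := fun e : Fin J2 × ℕ → ℝ => (n : ℝ)⁻¹ * ∑ i ∈ Finset.range (S.n2 n j), e (j, i))

lemma tendstoZeroUniformlyOnInMeasure_stage1Deviation (j : Fin J1) :
    TendstoZeroUniformlyOnInMeasure Pr (fun n β ω => S.stage1Deviation n j β ω) atTop S.B :=
  tendstoZeroUniformlyOnInMeasure_smul_add_smul_sub_smul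
    (g := fun a β => expectedScore S.h S.βstar (designVec a (S.z1 j)) β)
    (k := fun a β => meanGrad S.h (designVec a (S.z1 j)) β)
    (S.continuous_expectedScore_designVec _) (S.continuous_meanGrad_designVec _) S.B_compact
    isCompact_singleton (A := fun _ _ => S.a1 j) (fun _ _ => rfl)
    (tendstoInMeasure_const_of_tendsto tendsto_const_nhds) (S.α1_lim j)
    (S.tendstoInMeasure_stage1ErrorMean j)

lemma tendstoZeroUniformlyOnInMeasure_stage2Deviation (j : Fin J2) :
    TendstoZeroUniformlyOnInMeasure Pr (fun n β ω => S.stage2Deviation n j β ω) atTop S.B :=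
  tendstoZeroUniformlyOnInMeasure_smul_add_smul_sub_smul
    (g := fun a β => expectedScore S.h S.βstar (designVec a (S.z2 j)) β)
    (k := fun a β => meanGrad S.h (designVec a (S.z2 j)) β)
    (S.continuous_expectedScore_designVec _) (S.continuous_meanGrad_designVec _) S.B_compact
    (isCompact_closedBall 0 S.bound) (fun n ω => mem_closedBall_zero_iff.mpr (S.A2_bdd n j ω))
    (S.A2_tendsto j) (S.α2_lim j) (S.tendstoInMeasure_stage2ErrorMean j)

end LagoSetup

/-- **Uniform convergence of the LAGO estimating function (equation (5)):**
sup_{β ∈ B} ‖U_n(β) − u(β)‖ → 0 in probability. -/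
theorem lago_uniform_convergence
    {Ω : Type} [MeasurableSpace Ω] {Pr : Measure Ω} [IsProbabilityMeasure Pr]
    {J1 J2 P Q : ℕ} (S : LagoSetup Ω Pr J1 J2 P Q) :
    TendstoInMeasure Pr
      (fun n ω => sSup ((fun β => ‖S.U n β ω - S.uLim β‖) '' S.B))
      atTop (fun _ => (0 : ℝ)) := by
  have hdev := (tendstoZeroUniformlyOnInMeasure_finset_sum Finset.univ fun j _ =>
      S.tendstoZeroUniformlyOnInMeasure_stage1Deviation j).add
    (tendstoZeroUniformlyOnInMeasure_finset_sum Finset.univ fun j _ =>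
      S.tendstoZeroUniformlyOnInMeasure_stage2Deviation j)
  simpa only [← S.U_sub_uLim] using hdev.tendstoInMeasure_sSup

end
end
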